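/- arXiv:1608.00834 — 6 statements merged into one kernel-verified Lean document; each statement's English description precedes it below -/
import Mathlib

section
/- Let G be the group presented by ⟨a, b, c | a² = b⁻³, a² central, c³ = 1, abc = 1⟩ and W = G₄ = ⟨s, t | s³ = t³ = 1, sts = tst⟩. Then the maps φ₁ : W → G with s ↦ c, t ↦ c⁻¹b and φ₂ : G → W with a ↦ (sts)⁻¹, b ↦ st, c ↦ s are mutually inverse group isomorphisms. -/
/-!
With `c = s` and `b = s t`, the relation `a b c = 1` forces `a = (s t s)⁻¹`, and `a² = b⁻³` becomes
`(s t s)² = (s t)³`, which is the braid relation `s t s = t s t`. Conversely, in `G` the relations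
`a b c = 1` and `a² b³ = 1` give `c b c = b²`, the braid relation for `s = c`, `t = c⁻¹ b`; the same
identity says `c⁻¹ b = b c b⁻¹`, so `t` is conjugate to `s` and `t³ = 1`. In `W`, conjugation by
`Δ = s t s` swaps `s` and `t`, so `Δ²` is central.
-/

namespace Stmt3

inductive GenW | s | t
inductive GenG | a | b | c

open FreeGroup

/-- BMR presentation of G₄: ⟨s, t | s³ = t³ = 1, sts = tst⟩. -/
def relsW : Set (FreeGroup GenW) :=
  { of GenW.s ^ 3, of GenW.t ^ 3,
    of GenW.s * of GenW.t * of GenW.s * (of GenW.t * of GenW.s * of GenW.t)⁻¹ }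

/-- ER presentation: ⟨a, b, c | a² = b⁻³, a² central, c³ = 1, abc = 1⟩. -/
def relsG : Set (FreeGroup GenG) :=
  { of GenG.a ^ 2 * of GenG.b ^ 3,
    of GenG.a ^ 2 * of GenG.b * (of GenG.a ^ 2)⁻¹ * (of GenG.b)⁻¹,
    of GenG.a ^ 2 * of GenG.c * (of GenG.a ^ 2)⁻¹ * (of GenG.c)⁻¹,
    of GenG.c ^ 3,
    of GenG.a * of GenG.b * of GenG.c }

abbrev W := PresentedGroup relsW
abbrev G := PresentedGroup relsG

local notation "S" => (PresentedGroup.of GenW.s : W)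
local notation "T" => (PresentedGroup.of GenW.t : W)
local notation "A" => (PresentedGroup.of GenG.a : G)
local notation "B" => (PresentedGroup.of GenG.b : G)
local notation "C" => (PresentedGroup.of GenG.c : G)

variable {H : Type*} [Group H]

section

variable {x y : H}

theorem semiconjBy_braid_left (h : x * y * x = y * x * y) : SemiconjBy (x * y * x) x y := by
  calc x * y * x * x = y * x * y * x := by rw [h]
    _ = y * (x * y * x) := by group

theorem semiconjBy_braid_right (h : x * y * x = y * x * y) : SemiconjBy (x * y * x) y x := by
  calc x * y * x * y = x * (y * x * y) := by group
    _ = x * (x * y * x) := by rw [h]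

theorem commute_braid_sq_left (h : x * y * x = y * x * y) : Commute ((x * y * x) ^ 2) x := by
  rw [pow_two]; exact (semiconjBy_braid_right h).mul_left (semiconjBy_braid_left h)

theorem commute_braid_sq_right (h : x * y * x = y * x * y) : Commute ((x * y * x) ^ 2) y := by
  rw [pow_two]; exact (semiconjBy_braid_left h).mul_left (semiconjBy_braid_right h)

theorem braid_sq_eq_mul_pow_three (h : x * y * x = y * x * y) : (x * y * x) ^ 2 = (x * y) ^ 3 := by
  calc (x * y * x) ^ 2 = x * y * x * (y * x * y) := by rw [pow_two, ← h]
    _ = (x * y) ^ 3 := by simp only [pow_succ, pow_zero, one_mul, mul_assoc]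

end

section

variable {a b c : H}

theorem mul_mul_eq_sq_of_mul_mul_eq_one (habc : a * b * c = 1) (hab : a ^ 2 * b ^ 3 = 1) :
    c * b * c = b ^ 2 := by
  have hc : c = b⁻¹ * a⁻¹ := by rw [← mul_inv_rev]; exact eq_inv_of_mul_eq_one_right habc
  have ha : a ^ 2 = (b ^ 3)⁻¹ := eq_inv_of_mul_eq_one_left hab
  calc c * b * c = b⁻¹ * (a ^ 2)⁻¹ := by rw [hc]; group
    _ = b ^ 2 := by rw [ha]; group

theorem inv_mul_eq_conj_of_mul_mul_eq_sq (h : c * b * c = b ^ 2) : c⁻¹ * b = b * c * b⁻¹ := by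
  rw [inv_mul_eq_iff_eq_mul, ← mul_assoc, ← mul_assoc, h]; group

theorem inv_mul_pow_three_eq_one (h : c * b * c = b ^ 2) (hc : c ^ 3 = 1) : (c⁻¹ * b) ^ 3 = 1 := by
  rw [inv_mul_eq_conj_of_mul_mul_eq_sq h, conj_pow, hc, mul_one, mul_inv_cancel]

theorem braid_of_mul_mul_eq_sq (h : c * b * c = b ^ 2) :
    c * (c⁻¹ * b) * c = c⁻¹ * b * c * (c⁻¹ * b) := by
  calc c * (c⁻¹ * b) * c = c⁻¹ * (c * b * c) := by group
    _ = c⁻¹ * b * c * (c⁻¹ * b) := by rw [h, pow_two]; group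

end

namespace W

def lift {x y : H} (hx : x ^ 3 = 1) (hy : y ^ 3 = 1) (hxy : x * y * x = y * x * y) : W →* H :=
  PresentedGroup.toGroup (f := fun | .s => x | .t => y) <| by
    intro r hr
    simp only [relsW, Set.mem_insert_iff, Set.mem_singleton_iff] at hr
    rcases hr with rfl | rfl | rfl <;> simp [hx, hy, hxy]

section
variable {x y : H} (hx : x ^ 3 = 1) (hy : y ^ 3 = 1) (hxy : x * y * x = y * x * y)

@[simp] theorem lift_of_s : lift hx hy hxy S = x := PresentedGroup.toGroup.of _
@[simp] theorem lift_of_t : lift hx hy hxy T = y := PresentedGroup.toGroup.of _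

end

theorem of_s_pow_three : S ^ 3 = 1 :=
  PresentedGroup.one_of_mem (rels := relsW) (x := of GenW.s ^ 3) (by simp [relsW])

theorem braid : S * T * S = T * S * T :=
  PresentedGroup.mk_eq_mk_of_mul_inv_mem (rels := relsW) (by simp [relsW])

end W

namespace G

def lift {a b c : H} (hab : a ^ 2 * b ^ 3 = 1) (hb : Commute (a ^ 2) b) (hc : Commute (a ^ 2) c)
    (hc3 : c ^ 3 = 1) (habc : a * b * c = 1) : G →* H :=
  PresentedGroup.toGroup (f := fun | .a => a | .b => b | .c => c) <| by
    intro r hr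
    simp only [relsG, Set.mem_insert_iff, Set.mem_singleton_iff] at hr
    rcases hr with rfl | rfl | rfl | rfl | rfl <;>
      simp [hab, hc3, habc, ← commutatorElement_def, commutatorElement_eq_one_iff_commute, hb, hc]

section
variable {a b c : H} (hab : a ^ 2 * b ^ 3 = 1) (hb : Commute (a ^ 2) b) (hc : Commute (a ^ 2) c)
  (hc3 : c ^ 3 = 1) (habc : a * b * c = 1)

@[simp] theorem lift_of_a : lift hab hb hc hc3 habc A = a := PresentedGroup.toGroup.of _
@[simp] theorem lift_of_b : lift hab hb hc hc3 habc B = b := PresentedGroup.toGroup.of _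
@[simp] theorem lift_of_c : lift hab hb hc hc3 habc C = c := PresentedGroup.toGroup.of _

end

theorem of_a_sq_mul_of_b_pow_three : A ^ 2 * B ^ 3 = 1 :=
  PresentedGroup.one_of_mem (rels := relsG) (x := of GenG.a ^ 2 * of GenG.b ^ 3) (by simp [relsG])

theorem of_c_pow_three : C ^ 3 = 1 :=
  PresentedGroup.one_of_mem (rels := relsG) (x := of GenG.c ^ 3) (by simp [relsG])

theorem of_a_mul_of_b_mul_of_c : A * B * C = 1 :=
  PresentedGroup.one_of_mem (rels := relsG) (x := of GenG.a * of GenG.b * of GenG.c)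
    (by simp [relsG])

theorem of_c_mul_of_b_mul_of_c : C * B * C = B ^ 2 :=
  mul_mul_eq_sq_of_mul_mul_eq_one of_a_mul_of_b_mul_of_c of_a_sq_mul_of_b_pow_three

theorem inv_of_c_mul_inv_of_b : C⁻¹ * B⁻¹ = A := by
  rw [← mul_inv_rev]
  exact inv_eq_of_mul_eq_one_left (by rw [← mul_assoc]; exact of_a_mul_of_b_mul_of_c)

end G

def toG : W →* G :=
  W.lift G.of_c_pow_three (inv_mul_pow_three_eq_one G.of_c_mul_of_b_mul_of_c G.of_c_pow_three)
    (braid_of_mul_mul_eq_sq G.of_c_mul_of_b_mul_of_c)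

def toW : G →* W :=
  G.lift (a := (S * T * S)⁻¹) (b := S * T) (c := S)
    (by rw [inv_pow, braid_sq_eq_mul_pow_three W.braid, inv_mul_cancel])
    (by
      rw [inv_pow]
      exact ((commute_braid_sq_left W.braid).mul_right (commute_braid_sq_right W.braid)).inv_left)
    (by rw [inv_pow]; exact (commute_braid_sq_left W.braid).inv_left)
    W.of_s_pow_three (by group)

theorem toW_comp_toG : toW.comp toG = MonoidHom.id W := by
  ext g; cases g <;> simp [toW, toG]

theorem toG_comp_toW : toG.comp toW = MonoidHom.id G := by
  ext g; cases g <;> simp [toW, toG, G.inv_of_c_mul_inv_of_b]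

theorem G4_iso :
    ∃ (φ₁ : W →* G) (φ₂ : G →* W),
      φ₁ (PresentedGroup.of GenW.s) = PresentedGroup.of GenG.c ∧
      φ₁ (PresentedGroup.of GenW.t) =
        (PresentedGroup.of GenG.c)⁻¹ * PresentedGroup.of GenG.b ∧
      φ₂ (PresentedGroup.of GenG.a) =
        (PresentedGroup.of GenW.s * PresentedGroup.of GenW.t * PresentedGroup.of GenW.s)⁻¹ ∧
      φ₂ (PresentedGroup.of GenG.b) =
        PresentedGroup.of GenW.s * PresentedGroup.of GenW.t ∧
      φ₂ (PresentedGroup.of GenG.c) = PresentedGroup.of GenW.s ∧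
      φ₂.comp φ₁ = MonoidHom.id W ∧
      φ₁.comp φ₂ = MonoidHom.id G :=
  ⟨toG, toW, W.lift_of_s .., W.lift_of_t .., G.lift_of_a .., G.lift_of_b .., G.lift_of_c ..,
    toW_comp_toG, toG_comp_toW⟩

end Stmt3
end

section
/- Let G be the group presented by ⟨a, b, c | a² central, b³ = 1, c^k = 1, abc = 1⟩ and W = ⟨s, t | s³ = t^k = 1, stst = tsts⟩ for a fixed k ≥ 3. Then s ↦ b, t ↦ c extends to a group isomorphism W → G with inverse given by a ↦ (st)⁻¹, b ↦ s, c ↦ t. -/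
/-!
Put `a = (bc)⁻¹`. Then `bcbc = a⁻²`, so `a²` central gives `c (bcbc) c⁻¹ = bcbc`, which is the braid
relation `bcbc = cbcb`. Conversely, the braid relation says exactly that `(st)²` commutes with `t`,
hence also with `s = (st) t⁻¹`. So both sets of relations are respected by the two assignments, and
the composites fix every generator.
-/

namespace Stmt4

inductive GenW | s | t
inductive GenG | a | b | c

open FreeGroup

/-- BMR presentation ⟨s, t | s³ = tᵏ = 1, stst = tsts⟩ (G₅, G₁₀, G₁₈ for k = 3, 4, 5). -/
def relsW (k : ℕ) : Set (FreeGroup GenW) :=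
  { of GenW.s ^ 3, of GenW.t ^ k,
    of GenW.s * of GenW.t * of GenW.s * of GenW.t *
      (of GenW.t * of GenW.s * of GenW.t * of GenW.s)⁻¹ }

/-- ER presentation ⟨a, b, c | a² central, b³ = 1, cᵏ = 1, abc = 1⟩. -/
def relsG (k : ℕ) : Set (FreeGroup GenG) :=
  { of GenG.a ^ 2 * of GenG.b * (of GenG.a ^ 2)⁻¹ * (of GenG.b)⁻¹,
    of GenG.a ^ 2 * of GenG.c * (of GenG.a ^ 2)⁻¹ * (of GenG.c)⁻¹,
    of GenG.b ^ 3,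
    of GenG.c ^ k,
    of GenG.a * of GenG.b * of GenG.c }

end Stmt4

section GroupIdentities

variable {H : Type*} [Group H]

theorem braid_of_mul_mul_eq_one {a b c : H} (habc : a * b * c = 1) (hac : Commute (a ^ 2) c) :
    b * c * b * c = c * b * c * b := by
  have hbc : b * c = a⁻¹ := eq_inv_of_mul_eq_one_right (by rwa [← mul_assoc])
  have hbcbc : b * c * b * c = (a ^ 2)⁻¹ := by
    rw [mul_assoc (b * c), hbc, ← mul_inv_rev, ← sq]
  calc b * c * b * c = c * (b * c * b * c) * c⁻¹ := by
        rw [hbcbc, ← hac.inv_left.eq, mul_inv_cancel_right]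
    _ = c * b * c * b := by group

theorem commute_mul_sq_right_of_braid {s t : H} (h : s * t * s * t = t * s * t * s) :
    Commute ((s * t) ^ 2) t := by
  calc (s * t) ^ 2 * t = s * t * s * t * t := by simp only [sq, mul_assoc]
    _ = t * (s * t) ^ 2 := by rw [h]; simp only [sq, mul_assoc]

theorem commute_mul_sq_left_of_braid {s t : H} (h : s * t * s * t = t * s * t * s) :
    Commute ((s * t) ^ 2) s := by
  simpa using ((Commute.refl (s * t)).pow_left 2).mul_right
    (commute_mul_sq_right_of_braid h).inv_right

end GroupIdentities

theorem PresentedGroup.lift_of_eq_one {α : Type*} {rels : Set (FreeGroup α)} {r : FreeGroup α}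
    (hr : r ∈ rels) : FreeGroup.lift PresentedGroup.of r = (1 : PresentedGroup rels) := by
  have hlift : FreeGroup.lift PresentedGroup.of = PresentedGroup.mk rels :=
    FreeGroup.ext_hom _ _ fun _ => FreeGroup.lift_apply_of
  rw [hlift]
  exact PresentedGroup.one_of_mem hr

namespace Stmt4

section Relations

variable {k : ℕ} {H : Type*} [Group H]

theorem forall_relsW_lift_eq_one_iff (f : GenW → H) :
    (∀ r ∈ relsW k, FreeGroup.lift f r = 1) ↔
      f .s ^ 3 = 1 ∧ f .t ^ k = 1 ∧ f .s * f .t * f .s * f .t = f .t * f .s * f .t * f .s := by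
  simp only [relsW, Set.mem_insert_iff, Set.mem_singleton_iff, forall_eq_or_imp, forall_eq,
    map_mul, map_inv, map_pow, FreeGroup.lift_apply_of, mul_inv_eq_one]

theorem forall_relsG_lift_eq_one_iff (f : GenG → H) :
    (∀ r ∈ relsG k, FreeGroup.lift f r = 1) ↔
      Commute (f .a ^ 2) (f .b) ∧ Commute (f .a ^ 2) (f .c) ∧ f .b ^ 3 = 1 ∧ f .c ^ k = 1 ∧
        f .a * f .b * f .c = 1 := by
  simp only [relsG, Set.mem_insert_iff, Set.mem_singleton_iff, forall_eq_or_imp, forall_eq,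
    map_mul, map_inv, map_pow, FreeGroup.lift_apply_of, mul_inv_eq_iff_eq_mul,
    one_mul, Commute, SemiconjBy]

theorem of_relsW_relations :
    (PresentedGroup.of .s : PresentedGroup (relsW k)) ^ 3 = 1 ∧
      (PresentedGroup.of .t : PresentedGroup (relsW k)) ^ k = 1 ∧
      (PresentedGroup.of .s * PresentedGroup.of .t * PresentedGroup.of .s * PresentedGroup.of .t :
        PresentedGroup (relsW k)) =
        PresentedGroup.of .t * PresentedGroup.of .s * PresentedGroup.of .t * PresentedGroup.of .s :=
  (forall_relsW_lift_eq_one_iff _).1 fun _ => PresentedGroup.lift_of_eq_one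

theorem of_relsG_relations :
    Commute ((PresentedGroup.of .a : PresentedGroup (relsG k)) ^ 2) (PresentedGroup.of .b) ∧
      Commute ((PresentedGroup.of .a : PresentedGroup (relsG k)) ^ 2) (PresentedGroup.of .c) ∧
      (PresentedGroup.of .b : PresentedGroup (relsG k)) ^ 3 = 1 ∧
      (PresentedGroup.of .c : PresentedGroup (relsG k)) ^ k = 1 ∧
      (PresentedGroup.of .a * PresentedGroup.of .b * PresentedGroup.of .c :
        PresentedGroup (relsG k)) = 1 :=
  (forall_relsG_lift_eq_one_iff _).1 fun _ => PresentedGroup.lift_of_eq_one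

end Relations

def bmrToEr (k : ℕ) : PresentedGroup (relsW k) →* PresentedGroup (relsG k) :=
  PresentedGroup.toGroup (f := fun | .s => .of .b | .t => .of .c) <|
    (forall_relsW_lift_eq_one_iff _).2 <| by
      obtain ⟨-, hac, hb3, hck, habc⟩ := of_relsG_relations (k := k)
      exact ⟨hb3, hck, braid_of_mul_mul_eq_one habc hac⟩

def erToBmr (k : ℕ) : PresentedGroup (relsG k) →* PresentedGroup (relsW k) :=
  PresentedGroup.toGroup
    (f := fun | .a => (.of .s * .of .t)⁻¹ | .b => .of .s | .c => .of .t) <|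
    (forall_relsG_lift_eq_one_iff _).2 <| by
      obtain ⟨hs3, htk, hbraid⟩ := of_relsW_relations (k := k)
      refine ⟨?_, ?_, hs3, htk, by group⟩
      · rw [inv_pow]; exact (commute_mul_sq_left_of_braid hbraid).inv_left
      · rw [inv_pow]; exact (commute_mul_sq_right_of_braid hbraid).inv_left

theorem iso_general (k : ℕ) :
    ∃ (φ₁ : PresentedGroup (relsW k) →* PresentedGroup (relsG k))
      (φ₂ : PresentedGroup (relsG k) →* PresentedGroup (relsW k)),
      φ₁ (PresentedGroup.of GenW.s) = PresentedGroup.of GenG.b ∧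
      φ₁ (PresentedGroup.of GenW.t) = PresentedGroup.of GenG.c ∧
      φ₂ (PresentedGroup.of GenG.a) =
        (PresentedGroup.of GenW.s * PresentedGroup.of GenW.t)⁻¹ ∧
      φ₂ (PresentedGroup.of GenG.b) = PresentedGroup.of GenW.s ∧
      φ₂ (PresentedGroup.of GenG.c) = PresentedGroup.of GenW.t ∧
      φ₂.comp φ₁ = MonoidHom.id (PresentedGroup (relsW k)) ∧
      φ₁.comp φ₂ = MonoidHom.id (PresentedGroup (relsG k)) := by
  have habc := (of_relsG_relations (k := k)).2.2.2.2
  have hcb : ((PresentedGroup.of .c)⁻¹ * (PresentedGroup.of .b)⁻¹ : PresentedGroup (relsG k)) =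
      PresentedGroup.of .a := by
    rw [← mul_inv_rev]
    exact inv_eq_of_mul_eq_one_left (by rwa [← mul_assoc])
  refine ⟨bmrToEr k, erToBmr k, PresentedGroup.toGroup.of _, PresentedGroup.toGroup.of _,
    PresentedGroup.toGroup.of _, PresentedGroup.toGroup.of _, PresentedGroup.toGroup.of _,
    PresentedGroup.ext fun x => ?_, PresentedGroup.ext fun x => ?_⟩ <;>
  cases x <;> simp [bmrToEr, erToBmr, PresentedGroup.toGroup.of, hcb]

theorem iso (k : ℕ) (hk : 3 ≤ k) :
    ∃ (φ₁ : PresentedGroup (relsW k) →* PresentedGroup (relsG k))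
      (φ₂ : PresentedGroup (relsG k) →* PresentedGroup (relsW k)),
      φ₁ (PresentedGroup.of GenW.s) = PresentedGroup.of GenG.b ∧
      φ₁ (PresentedGroup.of GenW.t) = PresentedGroup.of GenG.c ∧
      φ₂ (PresentedGroup.of GenG.a) =
        (PresentedGroup.of GenW.s * PresentedGroup.of GenW.t)⁻¹ ∧
      φ₂ (PresentedGroup.of GenG.b) = PresentedGroup.of GenW.s ∧
      φ₂ (PresentedGroup.of GenG.c) = PresentedGroup.of GenW.t ∧
      φ₂.comp φ₁ = MonoidHom.id (PresentedGroup (relsW k)) ∧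
      φ₁.comp φ₂ = MonoidHom.id (PresentedGroup (relsG k)) :=
  iso_general k

end Stmt4
end

section
/- Let W = ⟨s, t, u | s² = t² = u² = 1, stust = ustus, tust = ustu⟩ (the group G₁₃). Then in W the element z = (stu)³ satisfies z = (tus)³ = (ust)³ and z is central. -/
/-!
Each braid relation rewrites one factor of a word of length nine: `stust·ustu = ustus·tust` and
`ustu·stust = tust·ustus` identify the three cyclic rotations of `(stu)³`. Conjugating a rotation
by its first letter gives the next one, so once the three agree, `(stu)³` commutes with every
generator.
-/

namespace Stmt7

inductive Gen | s | t | u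

open FreeGroup

/-- BMR presentation of G₁₃: ⟨s, t, u | s² = t² = u² = 1, stust = ustus, tust = ustu⟩. -/
def rels : Set (FreeGroup Gen) :=
  { of Gen.s ^ 2, of Gen.t ^ 2, of Gen.u ^ 2,
    of Gen.s * of Gen.t * of Gen.u * of Gen.s * of Gen.t *
      (of Gen.u * of Gen.s * of Gen.t * of Gen.u * of Gen.s)⁻¹,
    of Gen.t * of Gen.u * of Gen.s * of Gen.t *
      (of Gen.u * of Gen.s * of Gen.t * of Gen.u)⁻¹ }

end Stmt7

section Monoid

variable {M : Type*} [Monoid M]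

theorem mul_pow_mul_rotate (a b c : M) (n : ℕ) : a * (b * c * a) ^ n = (a * b * c) ^ n * a := by
  simpa only [mul_assoc] using (mul_pow_mul a (b * c) n).symm

variable {s t u : M}

theorem stu_cube_eq_ust_cube (h₁ : s * t * u * s * t = u * s * t * u * s)
    (h₂ : t * u * s * t = u * s * t * u) : (s * t * u) ^ 3 = (u * s * t) ^ 3 :=
  calc (s * t * u) ^ 3 = s * t * u * s * t * (u * s * t * u) := by
        simp only [pow_succ, pow_zero, one_mul, mul_assoc]
    _ = s * t * u * s * t * (t * u * s * t) := by rw [h₂]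
    _ = u * s * t * u * s * (t * u * s * t) := by rw [h₁]
    _ = (u * s * t) ^ 3 := by simp only [pow_succ, pow_zero, one_mul, mul_assoc]

theorem ust_cube_eq_tus_cube (h₁ : s * t * u * s * t = u * s * t * u * s)
    (h₂ : t * u * s * t = u * s * t * u) : (u * s * t) ^ 3 = (t * u * s) ^ 3 :=
  calc (u * s * t) ^ 3 = u * s * t * u * (s * t * u * s * t) := by
        simp only [pow_succ, pow_zero, one_mul, mul_assoc]
    _ = t * u * s * t * (s * t * u * s * t) := by rw [h₂]
    _ = t * u * s * t * (u * s * t * u * s) := by rw [h₁]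
    _ = (t * u * s) ^ 3 := by simp only [pow_succ, pow_zero, one_mul, mul_assoc]

end Monoid

theorem PresentedGroup.mem_center_of_forall_commute_of {α : Type*} {rels : Set (FreeGroup α)}
    {z : PresentedGroup rels} (h : ∀ x, Commute (PresentedGroup.of x) z) :
    z ∈ Subgroup.center (PresentedGroup rels) := by
  rw [Subgroup.center_eq_iInf (PresentedGroup.closure_range_of rels)]
  simp only [Subgroup.mem_iInf, Set.forall_mem_range, Subgroup.mem_centralizer_singleton_iff]
  exact fun x => (h x).eq.symm

namespace Stmt7

open FreeGroup

theorem G13_center :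
    let s : PresentedGroup rels := PresentedGroup.of Gen.s
    let t : PresentedGroup rels := PresentedGroup.of Gen.t
    let u : PresentedGroup rels := PresentedGroup.of Gen.u
    let z := (s * t * u) ^ 3
    z = (t * u * s) ^ 3 ∧ z = (u * s * t) ^ 3 ∧
    z ∈ Subgroup.center (PresentedGroup rels) := by
  intro s t u z
  have h₁ : s * t * u * s * t = u * s * t * u * s :=
    PresentedGroup.mk_eq_mk_of_mul_inv_mem (rels := rels)
      (x := of Gen.s * of Gen.t * of Gen.u * of Gen.s * of Gen.t)
      (y := of Gen.u * of Gen.s * of Gen.t * of Gen.u * of Gen.s) (by simp [rels])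
  have h₂ : t * u * s * t = u * s * t * u :=
    PresentedGroup.mk_eq_mk_of_mul_inv_mem (rels := rels)
      (x := of Gen.t * of Gen.u * of Gen.s * of Gen.t)
      (y := of Gen.u * of Gen.s * of Gen.t * of Gen.u) (by simp [rels])
  have hust : z = (u * s * t) ^ 3 := stu_cube_eq_ust_cube h₁ h₂
  have htus : z = (t * u * s) ^ 3 := hust.trans (ust_cube_eq_tus_cube h₁ h₂)
  refine ⟨htus, hust, PresentedGroup.mem_center_of_forall_commute_of fun x => ?_⟩
  cases x
  · calc s * z = s * (t * u * s) ^ 3 := by rw [htus]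
      _ = z * s := mul_pow_mul_rotate s t u 3
  · calc t * z = t * (u * s * t) ^ 3 := by rw [hust]
      _ = (t * u * s) ^ 3 * t := mul_pow_mul_rotate t u s 3
      _ = z * t := by rw [htus]
  · calc u * z = (u * s * t) ^ 3 * u := mul_pow_mul_rotate u s t 3
      _ = z * u := by rw [hust]

end Stmt7
end

section
/- Let W = ⟨s, t, u | s² = t² = u³ = 1, ustut = stutu, tus = stu⟩ (the group G₁₅). Then the element z = stutu satisfies z = ustut = tustu = tutus = utust and z is central in W. -/
namespace Stmt8

inductive Gen | s | t | u

open FreeGroup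

/-- BMR presentation of G₁₅: ⟨s, t, u | s² = t² = u³ = 1, ustut = stutu, tus = stu⟩. -/
def rels : Set (FreeGroup Gen) :=
  { of Gen.s ^ 2, of Gen.t ^ 2, of Gen.u ^ 3,
    of Gen.u * of Gen.s * of Gen.t * of Gen.u * of Gen.t *
      (of Gen.s * of Gen.t * of Gen.u * of Gen.t * of Gen.u)⁻¹,
    of Gen.t * of Gen.u * of Gen.s * (of Gen.s * of Gen.t * of Gen.u)⁻¹ }

/-! The element `z = stutu` is a product of generators in which `tus = stu` lets `s` pass from the
front to the back of `t u`, so `z` equals its cyclic rotations `tustu`, `tutus` and (with the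
relation `ustut = stutu`) `utust`. Multiplying a suitable rotation by a generator and cancelling
`s² = 1` or `t² = 1` shows that `z` commutes with `s`, `t` and `u`, hence with everything. -/

theorem PresentedGroup.mem_center_of_forall_commute_of {α : Type*} {R : Set (FreeGroup α)}
    {z : PresentedGroup R} (h : ∀ a, Commute z (PresentedGroup.of a)) :
    z ∈ Subgroup.center (PresentedGroup R) := by
  rw [Subgroup.center_eq_iInf (PresentedGroup.closure_range_of R)]
  simpa only [Subgroup.mem_iInf, Set.forall_mem_range, Subgroup.mem_centralizer_singleton_iff]
    using fun a => (h a).eq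

local notation "𝐬" => (PresentedGroup.of Gen.s : PresentedGroup rels)
local notation "𝐭" => (PresentedGroup.of Gen.t : PresentedGroup rels)
local notation "𝐮" => (PresentedGroup.of Gen.u : PresentedGroup rels)

theorem s_mul_s : 𝐬 * 𝐬 = 1 := by
  have h := PresentedGroup.one_of_mem (rels := rels) (x := of Gen.s ^ 2) (by simp [rels])
  rw [map_pow, pow_two] at h
  exact h

theorem t_mul_t : 𝐭 * 𝐭 = 1 := by
  have h := PresentedGroup.one_of_mem (rels := rels) (x := of Gen.t ^ 2) (by simp [rels])
  rw [map_pow, pow_two] at h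
  exact h

theorem ustut_eq_stutu : 𝐮 * 𝐬 * 𝐭 * 𝐮 * 𝐭 = 𝐬 * 𝐭 * 𝐮 * 𝐭 * 𝐮 :=
  PresentedGroup.mk_eq_mk_of_mul_inv_mem (x := of Gen.u * of Gen.s * of Gen.t * of Gen.u * of Gen.t)
    (y := of Gen.s * of Gen.t * of Gen.u * of Gen.t * of Gen.u) (by simp [rels])

theorem tus_eq_stu : 𝐭 * 𝐮 * 𝐬 = 𝐬 * 𝐭 * 𝐮 :=
  PresentedGroup.mk_eq_mk_of_mul_inv_mem (x := of Gen.t * of Gen.u * of Gen.s)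
    (y := of Gen.s * of Gen.t * of Gen.u) (by simp [rels])

theorem stutu_eq_tustu : 𝐬 * 𝐭 * 𝐮 * 𝐭 * 𝐮 = 𝐭 * 𝐮 * 𝐬 * 𝐭 * 𝐮 := by
  rw [tus_eq_stu]

theorem stutu_eq_tutus : 𝐬 * 𝐭 * 𝐮 * 𝐭 * 𝐮 = 𝐭 * 𝐮 * 𝐭 * 𝐮 * 𝐬 := by
  rw [stutu_eq_tustu]
  simpa only [mul_assoc] using congrArg (𝐭 * 𝐮 * ·) tus_eq_stu.symm

theorem stutu_eq_utust : 𝐬 * 𝐭 * 𝐮 * 𝐭 * 𝐮 = 𝐮 * 𝐭 * 𝐮 * 𝐬 * 𝐭 := by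
  rw [← ustut_eq_stutu]
  simpa only [mul_assoc] using congrArg (𝐮 * · * 𝐭) tus_eq_stu.symm

theorem commute_stutu_s : Commute (𝐬 * 𝐭 * 𝐮 * 𝐭 * 𝐮) 𝐬 :=
  calc (𝐬 * 𝐭 * 𝐮 * 𝐭 * 𝐮) * 𝐬 = 𝐭 * 𝐮 * 𝐭 * 𝐮 * (𝐬 * 𝐬) := by
        rw [stutu_eq_tutus, mul_assoc]
    _ = (𝐬 * 𝐬) * (𝐭 * 𝐮 * 𝐭 * 𝐮) := by rw [s_mul_s, mul_one, one_mul]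
    _ = 𝐬 * (𝐬 * 𝐭 * 𝐮 * 𝐭 * 𝐮) := by simp only [mul_assoc]

theorem commute_stutu_t : Commute (𝐬 * 𝐭 * 𝐮 * 𝐭 * 𝐮) 𝐭 :=
  calc (𝐬 * 𝐭 * 𝐮 * 𝐭 * 𝐮) * 𝐭 = 𝐮 * 𝐬 * 𝐭 * 𝐮 * (𝐭 * 𝐭) := by
        rw [← ustut_eq_stutu, mul_assoc]
    _ = (𝐭 * 𝐭) * (𝐮 * 𝐬 * 𝐭 * 𝐮) := by rw [t_mul_t, mul_one, one_mul]
    _ = 𝐭 * (𝐭 * 𝐮 * 𝐬 * 𝐭 * 𝐮) := by simp only [mul_assoc]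
    _ = 𝐭 * (𝐬 * 𝐭 * 𝐮 * 𝐭 * 𝐮) := by rw [← stutu_eq_tustu]

theorem commute_stutu_u : Commute (𝐬 * 𝐭 * 𝐮 * 𝐭 * 𝐮) 𝐮 :=
  calc (𝐬 * 𝐭 * 𝐮 * 𝐭 * 𝐮) * 𝐮 = 𝐮 * 𝐬 * 𝐭 * 𝐮 * 𝐭 * 𝐮 := by rw [ustut_eq_stutu]
    _ = 𝐮 * (𝐬 * 𝐭 * 𝐮 * 𝐭 * 𝐮) := by simp only [mul_assoc]

theorem G15_center :
    let s : PresentedGroup rels := PresentedGroup.of Gen.s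
    let t : PresentedGroup rels := PresentedGroup.of Gen.t
    let u : PresentedGroup rels := PresentedGroup.of Gen.u
    let z := s * t * u * t * u
    z = u * s * t * u * t ∧ z = t * u * s * t * u ∧
    z = t * u * t * u * s ∧ z = u * t * u * s * t ∧
    z ∈ Subgroup.center (PresentedGroup rels) := by
  refine ⟨ustut_eq_stutu.symm, stutu_eq_tustu, stutu_eq_tutus, stutu_eq_utust,
    PresentedGroup.mem_center_of_forall_commute_of fun a => ?_⟩
  cases a
  exacts [commute_stutu_s, commute_stutu_t, commute_stutu_u]

end Stmt8
end

section
/- Let G be the group presented by ⟨a, b, c | a² = 1, b³ central, c⁵ = b⁻⁶, abc = 1⟩ and W = ⟨s, t, u | s² = t² = u² = 1, stust = tustu = ustus⟩. Then the maps s ↦ a, t ↦ (b⁻¹cb²)⁻¹, u ↦ (cb)⁻¹ and a ↦ s, b ↦ tustu, c ↦ (stustu)⁻¹ extend to mutually inverse group isomorphisms between W and G. -/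
namespace Stmt10

inductive GenW | s | t | u
inductive GenG | a | b | c

open FreeGroup

/-- BMR presentation of G₂₂: ⟨s, t, u | s² = t² = u² = 1, stust = tustu = ustus⟩. -/
def relsW : Set (FreeGroup GenW) :=
  { of GenW.s ^ 2, of GenW.t ^ 2, of GenW.u ^ 2,
    of GenW.s * of GenW.t * of GenW.u * of GenW.s * of GenW.t *
      (of GenW.t * of GenW.u * of GenW.s * of GenW.t * of GenW.u)⁻¹,
    of GenW.t * of GenW.u * of GenW.s * of GenW.t * of GenW.u *
      (of GenW.u * of GenW.s * of GenW.t * of GenW.u * of GenW.s)⁻¹ }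

/-- ER presentation: ⟨a, b, c | a² = 1, b³ central, c⁵ = b⁻⁶, abc = 1⟩. -/
def relsG : Set (FreeGroup GenG) :=
  { of GenG.a ^ 2,
    of GenG.b ^ 3 * of GenG.a * (of GenG.b ^ 3)⁻¹ * (of GenG.a)⁻¹,
    of GenG.b ^ 3 * of GenG.c * (of GenG.b ^ 3)⁻¹ * (of GenG.c)⁻¹,
    of GenG.c ^ 5 * of GenG.b ^ 6,
    of GenG.a * of GenG.b * of GenG.c }

abbrev W := PresentedGroup relsW
abbrev G := PresentedGroup relsG

end Stmt10

/-! Writing `z = tustu`, the braid relations say that conjugation by `z` permutes `s ↦ u ↦ t ↦ s`,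
so `u = z⁻¹ s z`, `t = z⁻² s z²` and `z³` commutes with `s`. Conversely, when `b³` commutes with
`a`, conjugation by `b` permutes `a ↦ b⁻¹ a b ↦ b⁻² a b² ↦ a`. Both directions then rest on the
identity `(b⁻² a b²)(b⁻¹ a b) a (b⁻² a b²)(b⁻¹ a b) = b⁻⁵ (a b)⁵`: as `c = (a b)⁻¹`, it turns
`c⁵ = b⁻⁶` into `tustu = b` and back. -/

section Relations

variable {H : Type*} [Group H]

structure BMRRelations (s t u : H) : Prop where
  s_sq : s ^ 2 = 1
  t_sq : t ^ 2 = 1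
  u_sq : u ^ 2 = 1
  stust_eq_tustu : s * t * u * s * t = t * u * s * t * u
  tustu_eq_ustus : t * u * s * t * u = u * s * t * u * s

structure ERRelations (a b c : H) : Prop where
  a_sq : a ^ 2 = 1
  commute_b_cube_a : Commute (b ^ 3) a
  commute_b_cube_c : Commute (b ^ 3) c
  c_pow_five_mul_b_pow_six : c ^ 5 * b ^ 6 = 1
  abc_eq_one : a * b * c = 1

variable {a b t u : H}

theorem braid_word_eq_of_conj (hab : Commute (b ^ 3) a) (ht : t = b⁻¹ ^ 2 * a * b ^ 2)
    (hu : u = b⁻¹ * a * b) : t * u * a * t * u = b⁻¹ ^ 5 * (a * b) ^ 5 := by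
  subst ht hu
  have h : Commute (b ^ 3)⁻¹ ((a * b) ^ 3) :=
    ((hab.mul_right (Commute.pow_self b 3)).pow_right 3).inv_left
  calc _ = b⁻¹ ^ 2 * ((a * b) ^ 3 * (b ^ 3)⁻¹) * (a * b) ^ 2 := by
        simp only [pow_succ, pow_zero, one_mul]; group
    _ = b⁻¹ ^ 2 * ((b ^ 3)⁻¹ * (a * b) ^ 3) * (a * b) ^ 2 := by rw [h.eq]
    _ = b⁻¹ ^ 5 * (a * b) ^ 5 := by simp only [pow_succ, pow_zero, one_mul]; group

theorem braid_word_eq_of_conj_of_mul_pow_five (hab : Commute (b ^ 3) a)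
    (h5 : (a * b) ^ 5 = b ^ 6) (ht : t = b⁻¹ ^ 2 * a * b ^ 2) (hu : u = b⁻¹ * a * b) :
    t * u * a * t * u = b := by
  rw [braid_word_eq_of_conj hab ht hu, h5]; group

theorem BMRRelations.of_conj (ha : a ^ 2 = 1) (hab : Commute (b ^ 3) a)
    (h5 : (a * b) ^ 5 = b ^ 6) (ht : t = b⁻¹ ^ 2 * a * b ^ 2) (hu : u = b⁻¹ * a * b) :
    BMRRelations a t u := by
  have htustu := braid_word_eq_of_conj_of_mul_pow_five hab h5 ht hu
  let σ := MulAut.conj b⁻¹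
  have hσ (x : H) : σ x = b⁻¹ * x * b := by simp [σ]
  have hσa : σ a = u := by rw [hσ, hu]
  have hσu : σ u = t := by rw [hσ, hu, ht]; simp only [sq]; group
  have hσt : σ t = a := by
    calc σ t = (b ^ 3)⁻¹ * (a * b ^ 3) := by rw [hσ, ht]; simp only [pow_succ, pow_zero]; group
      _ = a := by rw [← hab.eq]; group
  have hσb : σ b = b := by rw [hσ]; group
  have hu2 : u ^ 2 = 1 := by rw [← hσa, ← map_pow, ha, map_one]
  refine ⟨ha, by rw [← hσu, ← map_pow, hu2, map_one], hu2, ?_, ?_⟩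
  · calc a * t * u * a * t = σ (t * u * a * t * u) := by simp only [map_mul, hσa, hσu, hσt]
      _ = t * u * a * t * u := by rw [htustu, hσb]
  · apply σ.injective
    simp only [map_mul, hσa, hσu, hσt, htustu, hσb]

end Relations

namespace ERRelations

variable {H : Type*} [Group H] {a b c : H}

theorem c_eq (h : ERRelations a b c) : c = (a * b)⁻¹ :=
  eq_inv_of_mul_eq_one_right h.abc_eq_one

theorem mul_pow_five (h : ERRelations a b c) : (a * b) ^ 5 = b ^ 6 := by
  have := h.c_pow_five_mul_b_pow_six
  rwa [h.c_eq, inv_pow, inv_mul_eq_one] at this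

theorem t_eq (h : ERRelations a b c) : (b⁻¹ * c * b ^ 2)⁻¹ = b⁻¹ ^ 2 * a * b ^ 2 := by
  rw [h.c_eq]; group

theorem u_eq (h : ERRelations a b c) : (c * b)⁻¹ = b⁻¹ * a * b := by
  rw [h.c_eq]; group

theorem bmrRelations (h : ERRelations a b c) : BMRRelations a (b⁻¹ * c * b ^ 2)⁻¹ (c * b)⁻¹ :=
  .of_conj h.a_sq h.commute_b_cube_a h.mul_pow_five h.t_eq h.u_eq

theorem tustu_eq (h : ERRelations a b c) :
    (b⁻¹ * c * b ^ 2)⁻¹ * (c * b)⁻¹ * a * (b⁻¹ * c * b ^ 2)⁻¹ * (c * b)⁻¹ = b :=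
  braid_word_eq_of_conj_of_mul_pow_five h.commute_b_cube_a h.mul_pow_five h.t_eq h.u_eq

theorem stustu_inv_eq (h : ERRelations a b c) :
    (a * (b⁻¹ * c * b ^ 2)⁻¹ * (c * b)⁻¹ * a * (b⁻¹ * c * b ^ 2)⁻¹ * (c * b)⁻¹)⁻¹ = c := by
  have htustu := h.tustu_eq
  simp only [mul_assoc] at htustu ⊢
  rw [htustu, h.c_eq]

end ERRelations

theorem stustu_eq_mul_tustu {H : Type*} [Group H] (s t u : H) :
    s * t * u * s * t * u = s * (t * u * s * t * u) := by
  simp only [mul_assoc]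

namespace BMRRelations

variable {H : Type*} [Group H] {s t u : H}

theorem semiconjBy_s (h : BMRRelations s t u) : SemiconjBy (t * u * s * t * u) s t := by
  calc t * u * s * t * u * s = u * s * t * u * s ^ 2 := by
        rw [h.tustu_eq_ustus, sq]; simp only [mul_assoc]
    _ = t ^ 2 * (u * s * t * u) := by rw [h.s_sq, h.t_sq, mul_one, one_mul]
    _ = t * (t * u * s * t * u) := by simp only [sq, mul_assoc]

theorem semiconjBy_t (h : BMRRelations s t u) : SemiconjBy (t * u * s * t * u) t u := by
  calc t * u * s * t * u * t = s * t * u * s * t ^ 2 := by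
        rw [← h.stust_eq_tustu, sq]; simp only [mul_assoc]
    _ = u ^ 2 * (s * t * u * s) := by rw [h.t_sq, h.u_sq, mul_one, one_mul]
    _ = u * (t * u * s * t * u) := by rw [h.tustu_eq_ustus]; simp only [sq, mul_assoc]

theorem semiconjBy_u (h : BMRRelations s t u) : SemiconjBy (t * u * s * t * u) u s := by
  calc t * u * s * t * u * u = s * t * u * s * t * u := by rw [← h.stust_eq_tustu]
    _ = s * (t * u * s * t * u) := by simp only [mul_assoc]

theorem commute_cube (h : BMRRelations s t u) : Commute ((t * u * s * t * u) ^ 3) s := by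
  rw [pow_three]
  exact h.semiconjBy_u.mul_left (h.semiconjBy_t.mul_left h.semiconjBy_s)

theorem u_eq (h : BMRRelations s t u) :
    u = (t * u * s * t * u)⁻¹ * s * (t * u * s * t * u) := by
  rw [mul_assoc, eq_inv_mul_iff_mul_eq]; exact h.semiconjBy_u

theorem t_eq (h : BMRRelations s t u) :
    t = (t * u * s * t * u)⁻¹ ^ 2 * s * (t * u * s * t * u) ^ 2 := by
  calc t = (t * u * s * t * u)⁻¹ * u * (t * u * s * t * u) := by
        rw [mul_assoc, eq_inv_mul_iff_mul_eq]; exact h.semiconjBy_t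
    _ = (t * u * s * t * u)⁻¹ * ((t * u * s * t * u)⁻¹ * s * (t * u * s * t * u)) *
        (t * u * s * t * u) := by rw [← h.u_eq]
    _ = _ := by generalize t * u * s * t * u = z; simp only [sq]; group

theorem mul_pow_five (h : BMRRelations s t u) :
    (s * (t * u * s * t * u)) ^ 5 = (t * u * s * t * u) ^ 6 := by
  have key := braid_word_eq_of_conj h.commute_cube h.t_eq h.u_eq
  rw [inv_pow, eq_inv_mul_iff_mul_eq, ← pow_succ] at key
  exact key.symm

theorem erRelations (h : BMRRelations s t u) :
    ERRelations s (t * u * s * t * u) (s * t * u * s * t * u)⁻¹ := by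
  rw [stustu_eq_mul_tustu]
  exact ⟨h.s_sq, h.commute_cube, (h.commute_cube.mul_right (Commute.pow_self _ 3)).inv_right,
    by rw [inv_pow, h.mul_pow_five, inv_mul_cancel], mul_inv_cancel _⟩

theorem conj_t_eq (h : BMRRelations s t u) :
    ((t * u * s * t * u)⁻¹ * (s * t * u * s * t * u)⁻¹ * (t * u * s * t * u) ^ 2)⁻¹ = t := by
  conv_rhs => rw [h.t_eq]
  rw [stustu_eq_mul_tustu]
  generalize t * u * s * t * u = z
  group

theorem conj_u_eq (h : BMRRelations s t u) :
    ((s * t * u * s * t * u)⁻¹ * (t * u * s * t * u))⁻¹ = u := by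
  conv_rhs => rw [h.u_eq]
  rw [stustu_eq_mul_tustu]
  generalize t * u * s * t * u = z
  group

end BMRRelations

theorem PresentedGroup.lift_of_eq_one_of_mem {α : Type*} {rels : Set (FreeGroup α)}
    {r : FreeGroup α} (hr : r ∈ rels) :
    FreeGroup.lift (PresentedGroup.of (rels := rels)) r = 1 := by
  rw [← FreeGroup.lift_unique (f := PresentedGroup.of) (PresentedGroup.mk rels) fun _ => rfl]
  exact PresentedGroup.one_of_mem hr

section Presentations

open Stmt10 PresentedGroup

variable {H : Type*} [Group H] {s t u a b c : H}

theorem bmrRelations_iff {f : GenW → H} :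
    BMRRelations (f .s) (f .t) (f .u) ↔ ∀ r ∈ relsW, FreeGroup.lift f r = 1 := by
  simp only [relsW, Set.mem_insert_iff, Set.mem_singleton_iff, forall_eq_or_imp, forall_eq,
    map_pow, map_mul, map_inv, FreeGroup.lift_apply_of, mul_inv_eq_one]
  exact ⟨fun ⟨h₁, h₂, h₃, h₄, h₅⟩ => ⟨h₁, h₂, h₃, h₄, h₅⟩,
    fun ⟨h₁, h₂, h₃, h₄, h₅⟩ => ⟨h₁, h₂, h₃, h₄, h₅⟩⟩

theorem erRelations_iff {f : GenG → H} :
    ERRelations (f .a) (f .b) (f .c) ↔ ∀ r ∈ relsG, FreeGroup.lift f r = 1 := by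
  simp only [relsG, Set.mem_insert_iff, Set.mem_singleton_iff, forall_eq_or_imp, forall_eq,
    map_pow, map_mul, map_inv, FreeGroup.lift_apply_of, mul_inv_eq_iff_eq_mul, one_mul]
  exact ⟨fun ⟨h₁, h₂, h₃, h₄, h₅⟩ => ⟨h₁, h₂, h₃, h₄, h₅⟩,
    fun ⟨h₁, h₂, h₃, h₄, h₅⟩ => ⟨h₁, h₂, h₃, h₄, h₅⟩⟩

theorem bmrRelations_of : BMRRelations (of .s : W) (of .t) (of .u) :=
  bmrRelations_iff.2 fun _ => lift_of_eq_one_of_mem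

theorem erRelations_of : ERRelations (of .a : G) (of .b) (of .c) :=
  erRelations_iff.2 fun _ => lift_of_eq_one_of_mem

def BMRRelations.lift (h : BMRRelations s t u) : W →* H :=
  toGroup (f := fun | .s => s | .t => t | .u => u) (bmrRelations_iff.1 h)

def ERRelations.lift (h : ERRelations a b c) : G →* H :=
  toGroup (f := fun | .a => a | .b => b | .c => c) (erRelations_iff.1 h)

theorem BMRRelations.lift_of_s (h : BMRRelations s t u) : h.lift (of .s) = s :=
  toGroup.of _
theorem BMRRelations.lift_of_t (h : BMRRelations s t u) : h.lift (of .t) = t :=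
  toGroup.of _
theorem BMRRelations.lift_of_u (h : BMRRelations s t u) : h.lift (of .u) = u :=
  toGroup.of _
theorem ERRelations.lift_of_a (h : ERRelations a b c) : h.lift (of .a) = a :=
  toGroup.of _
theorem ERRelations.lift_of_b (h : ERRelations a b c) : h.lift (of .b) = b :=
  toGroup.of _
theorem ERRelations.lift_of_c (h : ERRelations a b c) : h.lift (of .c) = c :=
  toGroup.of _

end Presentations

namespace Stmt10

theorem G22_iso :
    ∃ (φ₁ : W →* G) (φ₂ : G →* W),
      φ₁ (PresentedGroup.of GenW.s) = PresentedGroup.of GenG.a ∧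
      φ₁ (PresentedGroup.of GenW.t) =
        ((PresentedGroup.of GenG.b)⁻¹ * PresentedGroup.of GenG.c *
          (PresentedGroup.of GenG.b) ^ 2)⁻¹ ∧
      φ₁ (PresentedGroup.of GenW.u) =
        (PresentedGroup.of GenG.c * PresentedGroup.of GenG.b)⁻¹ ∧
      φ₂ (PresentedGroup.of GenG.a) = PresentedGroup.of GenW.s ∧
      φ₂ (PresentedGroup.of GenG.b) =
        PresentedGroup.of GenW.t * PresentedGroup.of GenW.u * PresentedGroup.of GenW.s *
          PresentedGroup.of GenW.t * PresentedGroup.of GenW.u ∧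
      φ₂ (PresentedGroup.of GenG.c) =
        (PresentedGroup.of GenW.s * PresentedGroup.of GenW.t * PresentedGroup.of GenW.u *
          PresentedGroup.of GenW.s * PresentedGroup.of GenW.t * PresentedGroup.of GenW.u)⁻¹ ∧
      φ₂.comp φ₁ = MonoidHom.id W ∧
      φ₁.comp φ₂ = MonoidHom.id G := by
  have hW := bmrRelations_of
  have hG := erRelations_of
  refine ⟨hG.bmrRelations.lift, hW.erRelations.lift, hG.bmrRelations.lift_of_s,
    hG.bmrRelations.lift_of_t, hG.bmrRelations.lift_of_u, hW.erRelations.lift_of_a,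
    hW.erRelations.lift_of_b, hW.erRelations.lift_of_c, ?_, ?_⟩
  · ext x
    cases x <;> simp only [MonoidHom.comp_apply, MonoidHom.id_apply, map_mul, map_inv, map_pow,
      BMRRelations.lift_of_s, BMRRelations.lift_of_t, BMRRelations.lift_of_u,
      ERRelations.lift_of_a, ERRelations.lift_of_b, ERRelations.lift_of_c,
      hW.conj_t_eq, hW.conj_u_eq]
  · ext x
    cases x <;> simp only [MonoidHom.comp_apply, MonoidHom.id_apply, map_mul, map_inv,
      BMRRelations.lift_of_s, BMRRelations.lift_of_t, BMRRelations.lift_of_u,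
      ERRelations.lift_of_a, ERRelations.lift_of_b, ERRelations.lift_of_c,
      hG.tustu_eq, hG.stustu_inv_eq]

end Stmt10
end

section
/- Let B be the group ⟨s, t, u | stus = tust = ustu⟩ (the braid group of G₁₂). Then the element z = (stu)⁴ is central in B. -/
/-!
Put `δ = stus`. The relations say `δ = tust = ustu`, so `δt = sδ`, `δu = tδ` and `δs = uδ`:
conjugation by `δ` permutes the generators cyclically, and `δ³` commutes with each of them.
Finally `(stu)⁴ = (stus)(tust)(ustu) = δ³`.
-/

namespace Stmt13

inductive Gen | s | t | u

open FreeGroup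

/-- Artin-like presentation of the braid group of G₁₂: ⟨s, t, u | stus = tust = ustu⟩. -/
def rels : Set (FreeGroup Gen) :=
  { of Gen.s * of Gen.t * of Gen.u * of Gen.s *
      (of Gen.t * of Gen.u * of Gen.s * of Gen.t)⁻¹,
    of Gen.u * of Gen.s * of Gen.t * of Gen.u *
      (of Gen.t * of Gen.u * of Gen.s * of Gen.t)⁻¹ }

end Stmt13

theorem SemiconjBy.commute_pow_three_of_cycle {M : Type*} [Monoid M] {d a b c : M}
    (hab : SemiconjBy d b a) (hbc : SemiconjBy d c b) (hca : SemiconjBy d a c) :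
    Commute (d ^ 3) a := by
  rw [pow_three]
  exact hab.mul_left (hbc.mul_left hca)

theorem Subgroup.mem_center_of_forall_commute {G : Type*} [Group G] {S : Set G}
    (hS : Subgroup.closure S = ⊤) {z : G} (hz : ∀ g ∈ S, Commute z g) :
    z ∈ Subgroup.center G := by
  simp only [Subgroup.center_eq_iInf hS, Subgroup.mem_iInf]
  exact fun g hg ↦ Subgroup.mem_centralizer_singleton_iff.mpr (hz g hg).eq

namespace Stmt13

section

variable {G : Type*} [Group G] {s t u : G}

theorem semiconjBy_t_s (hst : s * t * u * s = t * u * s * t) :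
    SemiconjBy (s * t * u * s) t s :=
  calc s * t * u * s * t = s * (t * u * s * t) := by simp only [mul_assoc]
    _ = s * (s * t * u * s) := by rw [hst]

theorem semiconjBy_u_t (hst : s * t * u * s = t * u * s * t)
    (hut : u * s * t * u = t * u * s * t) : SemiconjBy (s * t * u * s) u t :=
  calc s * t * u * s * u = t * (u * s * t * u) := by rw [hst]; simp only [mul_assoc]
    _ = t * (s * t * u * s) := by rw [hut, hst]

theorem semiconjBy_s_u (hst : s * t * u * s = t * u * s * t)
    (hut : u * s * t * u = t * u * s * t) : SemiconjBy (s * t * u * s) s u :=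
  calc s * t * u * s * s = u * s * t * u * s := by rw [hut, hst]
    _ = u * (s * t * u * s) := by simp only [mul_assoc]

theorem stu_pow_four_eq (hst : s * t * u * s = t * u * s * t)
    (hut : u * s * t * u = t * u * s * t) : (s * t * u) ^ 4 = (s * t * u * s) ^ 3 :=
  calc (s * t * u) ^ 4
        = (s * t * u * s) * (t * u * s * t) * (u * s * t * u) := by
          simp only [pow_succ, pow_zero, one_mul, mul_assoc]
    _ = (s * t * u * s) ^ 3 := by rw [hut, ← hst, pow_three, mul_assoc]

end

theorem stu4_central :
    let s : PresentedGroup rels := PresentedGroup.of Gen.s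
    let t : PresentedGroup rels := PresentedGroup.of Gen.t
    let u : PresentedGroup rels := PresentedGroup.of Gen.u
    (s * t * u) ^ 4 ∈ Subgroup.center (PresentedGroup rels) := by
  intro s t u
  have hst : s * t * u * s = t * u * s * t :=
    PresentedGroup.mk_eq_mk_of_mul_inv_mem (Set.mem_insert _ _)
  have hut : u * s * t * u = t * u * s * t :=
    PresentedGroup.mk_eq_mk_of_mul_inv_mem (Set.mem_insert_of_mem _ rfl)
  have hδt := semiconjBy_t_s hst
  have hδu := semiconjBy_u_t hst hut
  have hδs := semiconjBy_s_u hst hut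
  refine Subgroup.mem_center_of_forall_commute (PresentedGroup.closure_range_of rels) ?_
  rintro _ ⟨g, rfl⟩
  rw [stu_pow_four_eq hst hut]
  cases g
  · exact hδt.commute_pow_three_of_cycle hδu hδs
  · exact hδu.commute_pow_three_of_cycle hδs hδt
  · exact hδs.commute_pow_three_of_cycle hδt hδu

end Stmt13
end
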